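/- Let G be a finite simple graph with surplus(G) ≥ 1, and let Z be a nonempty independent set of G with |N(Z)| = |Z| + 1 such that N(Z) is also an independent set of G. Let G' be the struction graph obtained from G and Z. Then MM(G') ≤ MM(G) − |Z|. -/

import Mathlib

/-! Take a maximum matching `M'` of the struction graph. If the new vertex `z` is matched in `M'`
to `u`, then `u` has a neighbour `w ∈ N(Z)` in `G`; otherwise let `w ∈ N(Z)` be arbitrary.
Sending `z` to `w` turns `M'` into a matching of `G` on `(V ∖ (Z ∪ N(Z))) ∪ {w}`. Surplus at least
one gives Hall's condition for matching `Z` into `N(Z) ∖ {w}`: a nonempty `X ⊆ Z` has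
`|N(X) ∖ {w}| ≥ |N(X)| - 1 ≥ |X|`. The two matchings are vertex-disjoint, so
`MM(G) ≥ MM(G') + |Z|`. -/

open scoped Classical

/-- A fractional vertex cover of `G`. -/
def IsFVC {V : Type} (G : SimpleGraph V) (x : V → ℝ) : Prop :=
  (∀ v, 0 ≤ x v ∧ x v ≤ 1) ∧ ∀ ⦃u v⦄, G.Adj u v → 1 ≤ x u + x v

/-- The weight of a fractional vertex cover. -/
noncomputable def fvcWeight {V : Type} [Fintype V] (x : V → ℝ) : ℝ := ∑ v, x v

/-- `LP(G)`: the minimum weight of a fractional vertex cover of `G`. -/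
noncomputable def LPopt {V : Type} [Fintype V] (G : SimpleGraph V) : ℝ :=
  sInf {w : ℝ | ∃ x : V → ℝ, IsFVC G x ∧ w = fvcWeight x}

/-- A matching of `G`: a set of pairwise vertex-disjoint edges of `G`. -/
def IsMatchingSet {V : Type} (G : SimpleGraph V) (M : Finset (Sym2 V)) : Prop :=
  (∀ e ∈ M, e ∈ G.edgeSet) ∧ ∀ e ∈ M, ∀ f ∈ M, e ≠ f → ∀ v : V, v ∈ e → v ∉ f

/-- `MM(G)`: the maximum size of a matching of `G`. -/
noncomputable def MMnum {V : Type} (G : SimpleGraph V) : ℕ :=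
  sSup {n : ℕ | ∃ M : Finset (Sym2 V), IsMatchingSet G M ∧ M.card = n}

/-- `OPT(G)`: the minimum size of a vertex cover of `G`. -/
noncomputable def VCnum {V : Type} (G : SimpleGraph V) : ℕ :=
  sInf {n : ℕ | ∃ S : Finset V, (∀ ⦃u v⦄, G.Adj u v → u ∈ S ∨ v ∈ S) ∧ S.card = n}

/-- `N(X)`: the set of vertices outside `X` having a neighbour in `X`. -/
def nbhd {V : Type} (G : SimpleGraph V) (X : Set V) : Set V :=
  {v | v ∉ X ∧ ∃ u ∈ X, G.Adj u v}

/-- `X` is an independent set in `G`. -/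
def IndepSet {V : Type} (G : SimpleGraph V) (X : Set V) : Prop :=
  ∀ u ∈ X, ∀ v ∈ X, ¬ G.Adj u v

/-- `surplus(G) ≥ s`: every nonempty independent set `X` satisfies `|N(X)| ≥ |X| + s`. -/
def SurplusGE {V : Type} (G : SimpleGraph V) (s : ℕ) : Prop :=
  ∀ X : Set V, X.Nonempty → IndepSet G X → X.ncard + s ≤ (nbhd G X).ncard

/-- The matching `M` saturates the vertex `v`. -/
def Saturates {V : Type} (M : Finset (Sym2 V)) (v : V) : Prop := ∃ e ∈ M, v ∈ e

/-- `O(G)`: vertices left unsaturated by some maximum matching of `G`. -/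
def OSet {V : Type} (G : SimpleGraph V) : Set V :=
  {v | ∃ M : Finset (Sym2 V), IsMatchingSet G M ∧ M.card = MMnum G ∧ ¬ Saturates M v}

/-- `I(G)`: vertices outside `O(G)` having a neighbour in `O(G)`. -/
def ISet {V : Type} (G : SimpleGraph V) : Set V := nbhd G (OSet G)

/-- `P(G)`: the remaining vertices. -/
def GEPSet {V : Type} (G : SimpleGraph V) : Set V := (OSet G ∪ ISet G)ᶜ

/-- The struction graph obtained from `G` and `Z`: delete `Z`, identify `N(Z)`
into a single new vertex `z` adjacent to exactly those remaining vertices that are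
adjacent in `G` to some vertex of `N(Z)`. -/
def struction {V : Type} (G : SimpleGraph V) (Z : Set V) :
    SimpleGraph (((Z ∪ nbhd G Z)ᶜ : Set V) ⊕ Unit) where
  Adj a b :=
    match a, b with
    | Sum.inl u, Sum.inl v => G.Adj u.1 v.1
    | Sum.inl u, Sum.inr _ => ∃ w ∈ nbhd G Z, G.Adj w u.1
    | Sum.inr _, Sum.inl v => ∃ w ∈ nbhd G Z, G.Adj w v.1
    | Sum.inr _, Sum.inr _ => False
  symm := by
    constructor
    rintro (u | u) (v | v) h
    · exact h.symm
    · exact h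
    · exact h
    · exact h
  loopless := by
    constructor
    rintro (u | u) h
    · exact G.loopless.irrefl u.1 h
    · exact h


open Function Finset

section Matching

variable {V : Type} {G : SimpleGraph V}

lemma bddAbove_matchingSizes [Fintype V] (G : SimpleGraph V) :
    BddAbove {n : ℕ | ∃ M : Finset (Sym2 V), IsMatchingSet G M ∧ M.card = n} :=
  ⟨Fintype.card (Sym2 V), by rintro n ⟨M, -, rfl⟩; exact card_le_univ M⟩

lemma IsMatchingSet.card_le_MMnum [Fintype V] {M : Finset (Sym2 V)} (hM : IsMatchingSet G M) :
    M.card ≤ MMnum G :=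
  le_csSup (bddAbove_matchingSizes G) ⟨M, hM, rfl⟩

lemma exists_isMatchingSet_card_eq_MMnum [Fintype V] (G : SimpleGraph V) :
    ∃ M : Finset (Sym2 V), IsMatchingSet G M ∧ M.card = MMnum G :=
  Nat.sSup_mem (s := {n | ∃ M : Finset (Sym2 V), IsMatchingSet G M ∧ M.card = n})
    ⟨0, ∅, by simp [IsMatchingSet], rfl⟩ (bddAbove_matchingSizes G)

lemma disjoint_of_saturates {A B : Finset (Sym2 V)}
    (hAB : ∀ v, Saturates A v → ¬ Saturates B v) : Disjoint A B :=
  disjoint_left.mpr fun e heA heB => hAB _ ⟨e, heA, e.out_fst_mem⟩ ⟨e, heB, e.out_fst_mem⟩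

lemma IsMatchingSet.union {A B : Finset (Sym2 V)} (hA : IsMatchingSet G A)
    (hB : IsMatchingSet G B) (hAB : ∀ v, Saturates A v → ¬ Saturates B v) :
    IsMatchingSet G (A ∪ B) := by
  refine ⟨fun e he => (mem_union.mp he).elim (hA.1 e) (hB.1 e), ?_⟩
  intro e he f hf hef v hve hvf
  rcases mem_union.mp he with he | he <;> rcases mem_union.mp hf with hf | hf
  · exact hA.2 e he f hf hef v hve hvf
  · exact hAB v ⟨e, he, hve⟩ ⟨f, hf, hvf⟩
  · exact hAB v ⟨f, hf, hvf⟩ ⟨e, he, hve⟩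
  · exact hB.2 e he f hf hef v hve hvf

lemma IsMatchingSet.image {W : Type} {H : SimpleGraph W} {M : Finset (Sym2 W)} {f : W → V}
    (hf : Injective f) (hM : IsMatchingSet H M) (hG : ∀ e ∈ M, e.map f ∈ G.edgeSet) :
    IsMatchingSet G (M.image (Sym2.map f)) := by
  refine ⟨by simpa using hG, ?_⟩
  simp only [mem_image]
  rintro _ ⟨e, he, rfl⟩ _ ⟨e', he', rfl⟩ hne v hv hv'
  obtain ⟨a, ha, rfl⟩ := Sym2.mem_map.mp hv
  obtain ⟨b, hb, hab⟩ := Sym2.mem_map.mp hv'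
  exact hM.2 e he e' he' (by rintro rfl; exact hne rfl) a ha (hf hab ▸ hb)

lemma mem_range_of_saturates_image {W : Type} {M : Finset (Sym2 W)} {f : W → V} {v : V}
    (hv : Saturates (M.image (Sym2.map f)) v) : v ∈ Set.range f := by
  obtain ⟨_, he, hv⟩ := hv
  obtain ⟨e, -, rfl⟩ := mem_image.mp he
  obtain ⟨a, -, rfl⟩ := Sym2.mem_map.mp hv
  exact ⟨a, rfl⟩

lemma isMatchingSet_image_mk_of_injective {ι : Type} [Fintype ι] {g h : ι → V} (hg : Injective g)
    (hh : Injective h) (hgh : ∀ i j, g i ≠ h j) (hadj : ∀ i, G.Adj (g i) (h i)) :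
    IsMatchingSet G (univ.image fun i => s(g i, h i)) ∧
      (univ.image fun i => s(g i, h i)).card = Fintype.card ι := by
  have hne : ∀ i j, i ≠ j → ∀ v, v ∈ s(g i, h i) → v ∉ s(g j, h j) := by
    intro i j hij v hvi hvj
    simp only [Sym2.mem_iff] at hvi hvj
    rcases hvi with rfl | rfl <;> rcases hvj with h' | h'
    exacts [hij (hg h'), hgh i j h', hgh j i h'.symm, hij (hh h')]
  refine ⟨⟨by simpa using hadj, ?_⟩, ?_⟩
  · simp only [mem_image, mem_univ, true_and]
    rintro _ ⟨i, rfl⟩ _ ⟨j, rfl⟩ hij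
    exact hne i j (by rintro rfl; exact hij rfl)
  · refine (card_image_of_injective _ fun i j hij => by_contra fun h' => ?_).trans card_univ
    exact hne i j h' (g i) (Sym2.mem_mk_left _ _) (by rw [← hij]; exact Sym2.mem_mk_left _ _)

end Matching

section Surplus

variable {V : Type} [Fintype V] {G : SimpleGraph V} {Z : Set V}

lemma SurplusGE.exists_injective_adj_ne (hsur : SurplusGE G 1) (hZ : IndepSet G Z) (w : V) :
    ∃ f : Z → V, Injective f ∧ ∀ z : Z, G.Adj z (f z) ∧ f z ≠ w := by
  refine (Fintype.all_card_le_filter_rel_iff_exists_injective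
    fun (z : Z) v => G.Adj z v ∧ v ≠ w).mp fun A => ?_
  rcases A.eq_empty_or_nonempty with rfl | hA
  · simp
  set X : Set V := Subtype.val '' (A : Set Z)
  have hX : X.ncard + 1 ≤ (nbhd G X).ncard :=
    hsur X ((coe_nonempty.mpr hA).image _)
      fun u ⟨z, _, hu⟩ v ⟨z', _, hv⟩ => hu ▸ hv ▸ hZ _ z.2 _ z'.2
  have hNX : nbhd G X ⊆ insert w ({v | ∃ z ∈ A, G.Adj z v ∧ v ≠ w} : Finset V) := by
    rintro v ⟨-, _, ⟨z, hz, rfl⟩, hzv⟩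
    by_cases hvw : v = w
    · exact Or.inl hvw
    · exact Or.inr (by simpa using ⟨z, ⟨z.2, hz⟩, hzv, hvw⟩)
  calc A.card = X.ncard := by
        rw [Set.ncard_image_of_injective _ Subtype.val_injective, Set.ncard_coe_finset]
    _ ≤ (nbhd G X).ncard - 1 := by omega
    _ ≤ _ := by
        have hle := Set.ncard_le_ncard hNX
        rw [← coe_insert, Set.ncard_coe_finset] at hle
        have hins := card_insert_le w ({v | ∃ z ∈ A, G.Adj z v ∧ v ≠ w} : Finset V)
        omega

lemma SurplusGE.exists_isMatchingSet_avoiding (hsur : SurplusGE G 1) (hZ : IndepSet G Z)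
    (w : V) : ∃ M : Finset (Sym2 V), IsMatchingSet G M ∧ M.card = Z.ncard ∧
      ∀ v, Saturates M v → v ∈ Z ∨ v ∈ nbhd G Z ∧ v ≠ w := by
  obtain ⟨f, hf, hfw⟩ := hsur.exists_injective_adj_ne hZ w
  have hfZ (z : Z) : f z ∉ Z := fun h => hZ _ z.2 _ h (hfw z).1
  obtain ⟨hM, hcard⟩ := isMatchingSet_image_mk_of_injective Subtype.val_injective hf
    (fun z z' h => hfZ z' (h ▸ z.2)) fun z => (hfw z).1
  refine ⟨_, hM, by rw [hcard, ← Nat.card_eq_fintype_card, Nat.card_coe_set_eq], ?_⟩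
  rintro v ⟨_, he, hv⟩
  obtain ⟨z, -, rfl⟩ := mem_image.mp he
  rcases Sym2.mem_iff.mp hv with rfl | rfl
  · exact Or.inl z.2
  · exact Or.inr ⟨⟨hfZ z, z, z.2, (hfw z).1⟩, (hfw z).2⟩

end Surplus

section Struction

variable {V : Type} {G : SimpleGraph V} {Z : Set V}

def structionLift (G : SimpleGraph V) (Z : Set V) (w : V) :
    ((Z ∪ nbhd G Z)ᶜ : Set V) ⊕ Unit → V :=
  Sum.elim Subtype.val fun _ => w

lemma structionLift_eq_or_notMem (w : V) (x : ((Z ∪ nbhd G Z)ᶜ : Set V) ⊕ Unit) :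
    structionLift G Z w x = w ∨ structionLift G Z w x ∉ Z ∪ nbhd G Z := by
  rcases x with a | _
  · exact Or.inr a.2
  · exact Or.inl rfl

lemma structionLift_injective {w : V} (hw : w ∈ nbhd G Z) : Injective (structionLift G Z w) := by
  have hne (a : ((Z ∪ nbhd G Z)ᶜ : Set V)) : a.1 ≠ w := fun h => a.2 (Or.inr (h ▸ hw))
  rintro (a | ⟨⟩) (b | ⟨⟩) h
  · exact congrArg Sum.inl (Subtype.ext h)
  · exact absurd h (hne a)
  · exact absurd h.symm (hne b)
  · rfl

lemma map_structionLift_mem_edgeSet {e : Sym2 (((Z ∪ nbhd G Z)ᶜ : Set V) ⊕ Unit)}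
    (he : e ∈ (struction G Z).edgeSet) (hz : Sum.inr () ∉ e) (w : V) :
    e.map (structionLift G Z w) ∈ G.edgeSet := by
  induction e using Sym2.ind with | _ x y => ?_
  rcases x with a | ⟨⟩ <;> rcases y with b | ⟨⟩
  · exact he
  · simp at hz
  · simp at hz
  · exact he.elim

lemma exists_map_structionLift_mem_edgeSet {e : Sym2 (((Z ∪ nbhd G Z)ᶜ : Set V) ⊕ Unit)}
    (he : e ∈ (struction G Z).edgeSet) (hz : Sum.inr () ∈ e) :
    ∃ w ∈ nbhd G Z, e.map (structionLift G Z w) ∈ G.edgeSet := by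
  induction e using Sym2.ind with | _ x y => ?_
  rcases x with a | ⟨⟩ <;> rcases y with b | ⟨⟩
  · simp at hz
  · obtain ⟨w, hw, hwa⟩ := he
    exact ⟨w, hw, hwa.symm⟩
  · exact he
  · exact he.elim

-- At most one edge of a matching contains the new vertex, so at most one edge constrains `w`.
lemma IsMatchingSet.exists_map_structionLift
    {M : Finset (Sym2 (((Z ∪ nbhd G Z)ᶜ : Set V) ⊕ Unit))} (hM : IsMatchingSet (struction G Z) M)
    (hN : (nbhd G Z).Nonempty) :
    ∃ w ∈ nbhd G Z, ∀ e ∈ M, e.map (structionLift G Z w) ∈ G.edgeSet := by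
  by_cases hz : Saturates M (Sum.inr ())
  · obtain ⟨e₀, he₀, hz₀⟩ := hz
    obtain ⟨w, hw, hw₀⟩ := exists_map_structionLift_mem_edgeSet (hM.1 e₀ he₀) hz₀
    refine ⟨w, hw, fun e he => ?_⟩
    by_cases h : e = e₀
    · exact h ▸ hw₀
    · exact map_structionLift_mem_edgeSet (hM.1 e he)
        (fun hze => hM.2 e he e₀ he₀ h _ hze hz₀) w
  · obtain ⟨w, hw⟩ := hN
    exact ⟨w, hw, fun e he =>
      map_structionLift_mem_edgeSet (hM.1 e he) (fun hze => hz ⟨e, he, hze⟩) w⟩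

end Struction

theorem mm_struction_le_general {V : Type} [Fintype V] (G : SimpleGraph V)
    (hsur : SurplusGE G 1) (Z : Set V) (hZne : Z.Nonempty) (hZind : IndepSet G Z) :
    MMnum (struction G Z) + Z.ncard ≤ MMnum G := by
  obtain ⟨M', hM', hM'card⟩ := exists_isMatchingSet_card_eq_MMnum (struction G Z)
  have hN : (nbhd G Z).Nonempty :=
    Set.nonempty_of_ncard_ne_zero (by have := hsur Z hZne hZind; omega)
  obtain ⟨w, hw, hedges⟩ := hM'.exists_map_structionLift hN
  obtain ⟨MZ, hMZ, hMZcard, hMZsat⟩ := hsur.exists_isMatchingSet_avoiding hZind w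
  set ML := M'.image (Sym2.map (structionLift G Z w))
  have hdisj : ∀ v, Saturates ML v → ¬ Saturates MZ v := by
    intro v hvL hvZ
    obtain ⟨x, rfl⟩ := mem_range_of_saturates_image hvL
    rcases structionLift_eq_or_notMem w x with hx | hx <;> rcases hMZsat _ hvZ with hZ | hNw
    · exact hw.1 (hx ▸ hZ)
    · exact hNw.2 hx
    · exact hx (Or.inl hZ)
    · exact hx (Or.inr hNw.1)
  calc MMnum (struction G Z) + Z.ncard = ML.card + MZ.card := by
        rw [card_image_of_injective _ (Sym2.map.injective (structionLift_injective hw)),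
          hM'card, hMZcard]
    _ = (ML ∪ MZ).card := (card_union_of_disjoint (disjoint_of_saturates hdisj)).symm
    _ ≤ MMnum G := ((hM'.image (structionLift_injective hw) hedges).union hMZ hdisj).card_le_MMnum

/-- Struction drops the matching number by at least `|Z|`. -/
theorem mm_struction_le {V : Type} [Fintype V] (G : SimpleGraph V)
    (hsur : SurplusGE G 1) (Z : Set V) (hZne : Z.Nonempty) (hZind : IndepSet G Z)
    (hZsur : (nbhd G Z).ncard = Z.ncard + 1) (hNind : IndepSet G (nbhd G Z)) :
    MMnum (struction G Z) + Z.ncard ≤ MMnum G :=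
  mm_struction_le_general G hsur Z hZne hZind
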